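/- Let τ be a rooted binary tree topology on X and X̄ ⊆ X. If s, s' ∈ τ and the restrictions s|X̄ and s'|X̄ are equal and nontrivial, then s = s'. (Equivalently: all subsplits on X that restrict to the same nontrivial subsplit on X̄ are mutually exclusive, in that no topology contains two distinct ones.) -/

import Mathlib

open Finset

attribute [local instance] Classical.propDecidable

/-- A subsplit on taxa of type `α`: an unordered pair of finite subsets of taxa. -/
abbrev Subsplit (α : Type*) := Sym2 (Finset α)

/-- A parent-child subsplit pair (PCSP): a pair `(t, s)` of subsplits. -/
abbrev PCSPair (α : Type*) := Subsplit α × Subsplit α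

namespace Subsplit

variable {α : Type*} [DecidableEq α]

/-- The parent clade `U(s)` of a subsplit: the union of its two child clades. -/
def clade (s : Subsplit α) : Finset α :=
  Sym2.lift ⟨fun Y Z => Y ∪ Z, fun _ _ => Finset.union_comm _ _⟩ s

/-- A subsplit is valid when its two child clades are disjoint. -/
def Valid (s : Subsplit α) : Prop :=
  Sym2.lift ⟨fun Y Z => Disjoint Y Z, fun _ _ => propext disjoint_comm⟩ s

/-- A subsplit is nontrivial when both child clades are nonempty. -/
def Nontriv (s : Subsplit α) : Prop :=
  Sym2.lift ⟨fun Y Z => Y.Nonempty ∧ Z.Nonempty, fun _ _ => propext and_comm⟩ s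

/-- Restriction of a subsplit to a taxon subset `B`. -/
def restrict (s : Subsplit α) (B : Finset α) : Subsplit α := Sym2.map (fun Y => Y ∩ B) s

end Subsplit

section Defs

variable {α : Type*} [DecidableEq α]

/-- `τ` is a rooted binary tree topology on the clade `W`. -/
structure IsTopology (W : Finset α) (τ : Finset (Subsplit α)) : Prop where
  two_le : 2 ≤ W.card
  valid : ∀ s ∈ τ, Subsplit.Valid s
  nontriv : ∀ s ∈ τ, Subsplit.Nontriv s
  root : ∃! s, s ∈ τ ∧ Subsplit.clade s = W
  children : ∀ s ∈ τ, ∀ C ∈ s, 2 ≤ C.card → ∃! s', s' ∈ τ ∧ Subsplit.clade s' = C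
  parentEx : ∀ s ∈ τ, Subsplit.clade s = W ∨ ∃ t ∈ τ, Subsplit.clade s ∈ t

/-- Restriction of a topology (set of subsplits) to taxon subset `B`:
restrict every subsplit and keep the nontrivial results. -/
noncomputable def restrictT (τ : Finset (Subsplit α)) (B : Finset α) : Finset (Subsplit α) :=
  (τ.image (fun s => Subsplit.restrict s B)).filter (fun s => Subsplit.Nontriv s)

/-- A subsplit support on taxon set `X'`: a set of valid nontrivial subsplits on `X'`. -/
def IsSupport (X' : Finset α) (S : Set (Subsplit α)) : Prop :=
  ∀ s ∈ S, Subsplit.Valid s ∧ Subsplit.Nontriv s ∧ Subsplit.clade s ⊆ X'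

/-- `S(W)`: members of `S` dividing the clade `W`, together with the trivial subsplit `{W, ∅}`. -/
def supportAt (S : Set (Subsplit α)) (W : Finset α) : Set (Subsplit α) :=
  {s | s ∈ S ∧ Subsplit.clade s = W} ∪ {Sym2.mk W (∅ : Finset α)}

/-- The set `s₁ ⊠ s₂` of the two candidate combinations of two subsplits. -/
def boxTimes (s₁ s₂ : Subsplit α) : Set (Subsplit α) :=
  {s | ∃ Y₁ Z₁ Y₂ Z₂ : Finset α, s₁ = Sym2.mk Y₁ Z₁ ∧ s₂ = Sym2.mk Y₂ Z₂ ∧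
    (s = Sym2.mk (Y₁ ∪ Y₂) (Z₁ ∪ Z₂) ∨ s = Sym2.mk (Y₁ ∪ Z₂) (Z₁ ∪ Y₂))}

/-- Reachable clades in the mutual subsplit support construction. -/
inductive ReachClade (S₁ S₂ : Set (Subsplit α)) (X₁ X₂ : Finset α) : Finset α → Prop
  | root : ReachClade S₁ S₂ X₁ X₂ (X₁ ∪ X₂)
  | step {W : Finset α} {s₁ s₂ s : Subsplit α} {C : Finset α} :
      ReachClade S₁ S₂ X₁ X₂ W →
      s₁ ∈ supportAt S₁ (W ∩ X₁) → s₂ ∈ supportAt S₂ (W ∩ X₂) →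
      s ∈ boxTimes s₁ s₂ → Subsplit.Valid s → Subsplit.Nontriv s →
      C ∈ s → 2 ≤ C.card → ReachClade S₁ S₂ X₁ X₂ C

/-- The mutual subsplit support `M(S₁, S₂)`. -/
def mutualSupport (S₁ S₂ : Set (Subsplit α)) (X₁ X₂ : Finset α) : Set (Subsplit α) :=
  {s | ∃ W s₁ s₂, ReachClade S₁ S₂ X₁ X₂ W ∧
    s₁ ∈ supportAt S₁ (W ∩ X₁) ∧ s₂ ∈ supportAt S₂ (W ∩ X₂) ∧
    s ∈ boxTimes s₁ s₂ ∧ Subsplit.Valid s ∧ Subsplit.Nontriv s}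

/-- `(t, s)` is a PCSP on taxon set `X`: `s` is a valid nontrivial subsplit, and `t` is a
subsplit (or the root placeholder `⟨X, ∅⟩`) on `X` having `U(s)` as a child clade. -/
def IsPCSPOn (X : Finset α) (p : PCSPair α) : Prop :=
  Subsplit.Valid p.2 ∧ Subsplit.Nontriv p.2 ∧ Subsplit.Valid p.1 ∧
    Subsplit.clade p.2 ∈ p.1 ∧ Subsplit.clade p.1 ⊆ X ∧
    (Subsplit.Nontriv p.1 ∨ p.1 = Sym2.mk X (∅ : Finset α))

/-- A PCSP support on taxon set `X'`. -/
def IsPCSPSupport (X' : Finset α) (P : Set (PCSPair α)) : Prop :=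
  ∀ p ∈ P, IsPCSPOn X' p

/-- The subsplits of a PCSP support: subsplits occurring in some pair of `P`,
together with the root placeholder `⟨X', ∅⟩`. -/
def subsplitsOfP (X' : Finset α) (P : Set (PCSPair α)) : Set (Subsplit α) :=
  {u | (∃ s, (u, s) ∈ P) ∨ (∃ t, (t, u) ∈ P)} ∪ {Sym2.mk X' (∅ : Finset α)}

/-- `P(t/W)`: the subsplits `s` with `U(s) = W` and `(t → s) ∈ P`,
together with the trivial subsplit `{W, ∅}`. -/
def pcspSupportAt (P : Set (PCSPair α)) (t : Subsplit α) (W : Finset α) : Set (Subsplit α) :=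
  {s | Subsplit.clade s = W ∧ (t, s) ∈ P} ∪ {Sym2.mk W (∅ : Finset α)}

/-- Reachable states `(t/W, t₁/W₁, t₂/W₂)` in the mutual PCSP support construction. -/
inductive ReachState (P₁ P₂ : Set (PCSPair α)) (X₁ X₂ : Finset α) :
    Subsplit α → Finset α → Subsplit α → Finset α → Subsplit α → Finset α → Prop
  | root : ReachState P₁ P₂ X₁ X₂ (Sym2.mk (X₁ ∪ X₂) (∅ : Finset α)) (X₁ ∪ X₂)
      (Sym2.mk X₁ (∅ : Finset α)) X₁ (Sym2.mk X₂ (∅ : Finset α)) X₂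
  | step {t : Subsplit α} {W : Finset α} {t₁ : Subsplit α} {W₁ : Finset α}
      {t₂ : Subsplit α} {W₂ : Finset α} {s₁ s₂ s u₁ u₂ : Subsplit α} {C : Finset α} :
      ReachState P₁ P₂ X₁ X₂ t W t₁ W₁ t₂ W₂ →
      s₁ ∈ pcspSupportAt P₁ t₁ W₁ → s₂ ∈ pcspSupportAt P₂ t₂ W₂ →
      s ∈ boxTimes s₁ s₂ → Subsplit.Valid s → Subsplit.Nontriv s →
      ((Subsplit.Nontriv s₁ ∧ u₁ = s₁) ∨ (¬ Subsplit.Nontriv s₁ ∧ u₁ = t₁)) →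
      ((Subsplit.Nontriv s₂ ∧ u₂ = s₂) ∨ (¬ Subsplit.Nontriv s₂ ∧ u₂ = t₂)) →
      C ∈ s → 2 ≤ C.card →
      ReachState P₁ P₂ X₁ X₂ s C u₁ (C ∩ X₁) u₂ (C ∩ X₂)

/-- The mutual PCSP support `M(P₁, P₂)`. -/
def mutualPCSP (P₁ P₂ : Set (PCSPair α)) (X₁ X₂ : Finset α) : Set (PCSPair α) :=
  {p | ∃ W t₁ W₁ t₂ W₂ s₁ s₂, ReachState P₁ P₂ X₁ X₂ p.1 W t₁ W₁ t₂ W₂ ∧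
    s₁ ∈ pcspSupportAt P₁ t₁ W₁ ∧ s₂ ∈ pcspSupportAt P₂ t₂ W₂ ∧
    p.2 ∈ boxTimes s₁ s₂ ∧ Subsplit.Valid p.2 ∧ Subsplit.Nontriv p.2}

/-- `PathTo M a c`: there is a chain of parent-child pairs of `M` from `a` down to `c`
(possibly empty, when `a = c`). -/
inductive PathTo (M : Set (PCSPair α)) : Subsplit α → Subsplit α → Prop
  | refl (a : Subsplit α) : PathTo M a a
  | cons {a b c : Subsplit α} : (a, b) ∈ M → PathTo M b c → PathTo M a c

/-- `(t, s)` is a PCSP of the topology `τ` on `X`: `s ∈ τ` and `t` is a member of `τ`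
having `U(s)` as a child clade, or the root placeholder `⟨X, ∅⟩` when `U(s) = X`. -/
def IsPCSPOf (X : Finset α) (τ : Finset (Subsplit α)) (t s : Subsplit α) : Prop :=
  s ∈ τ ∧ ((t ∈ τ ∧ Subsplit.clade s ∈ t) ∨
    (Subsplit.clade s = X ∧ t = Sym2.mk X (∅ : Finset α)))

/-- The set of PCSPs of a topology `τ` on `X`. -/
def pcspSet (X : Finset α) (τ : Finset (Subsplit α)) : Set (PCSPair α) :=
  {p | IsPCSPOf X τ p.1 p.2}

/-- `a` is an ancestor of `s` in `τ`: `a ∈ τ` (or the root placeholder) and `U(s)` is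
contained in a child clade of `a`. -/
def IsAncestor (X : Finset α) (τ : Finset (Subsplit α)) (a s : Subsplit α) : Prop :=
  (a ∈ τ ∨ a = Sym2.mk X (∅ : Finset α)) ∧ ∃ C ∈ a, Subsplit.clade s ⊆ C

/-- `d` is a strict descendant of `a`: `U(d)` is contained in a child clade of `a`. -/
def StrictDesc (a d : Subsplit α) : Prop := ∃ C ∈ a, Subsplit.clade d ⊆ C

/-- `d` is a (valid) descendant of `a`: `d = a`, or `U(d)` is contained in a child clade
of `a`. -/
def Descend (a d : Subsplit α) : Prop := d = a ∨ ∃ C ∈ a, Subsplit.clade d ⊆ C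

/-- The parent subsplit of `s` in `τ` (on taxon set `X`): the member of `τ` having `U(s)`
as a child clade if one exists, otherwise the root placeholder `⟨X, ∅⟩`. -/
noncomputable def parentIn (X : Finset α) (τ : Finset (Subsplit α)) (s : Subsplit α) :
    Subsplit α :=
  if h : ∃ t ∈ τ, Subsplit.clade s ∈ t then h.choose else Sym2.mk X (∅ : Finset α)

/-- The finite set of PCSPs of a topology `τ` on `X`. -/
noncomputable def pcspFinset (X : Finset α) (τ : Finset (Subsplit α)) : Finset (PCSPair α) :=
  τ.image (fun s => (parentIn X τ s, s))

/-- All (valid) subsplits on the taxon set `X`. -/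
noncomputable def allSubsplits (X : Finset α) : Finset (Subsplit α) :=
  ((X.powerset ×ˢ X.powerset).image (fun p => Sym2.mk p.1 p.2)).filter (fun s => Subsplit.Valid s)

/-- All nontrivial (valid) subsplits dividing the clade `W`. -/
noncomputable def subsplitsOn (W : Finset α) : Finset (Subsplit α) :=
  (W.powerset.image (fun Y => Sym2.mk Y (W \ Y))).filter (fun s => Subsplit.Nontriv s)

/-- All nontrivial subsplits whose parent clade is a child clade of `a`. -/
noncomputable def childSubsplits (a : Subsplit α) : Finset (Subsplit α) :=
  Sym2.lift ⟨fun Y Z => subsplitsOn Y ∪ subsplitsOn Z, fun _ _ => Finset.union_comm _ _⟩ a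

end Defs

section CCD

variable {α : Type*} [DecidableEq α]

/-- CCD softmax conditional probability `q(s | U(s))`. -/
noncomputable def ccdCond (v : Subsplit α → ℝ) (s : Subsplit α) : ℝ :=
  Real.exp (v s) / ∑ s' ∈ subsplitsOn (Subsplit.clade s), Real.exp (v s')

/-- CCD probability of a topology: `q(τ) = ∏_{s ∈ τ} q(s | U(s))`. -/
noncomputable def ccdTopProb (v : Subsplit α → ℝ) (τ : Finset (Subsplit α)) : ℝ :=
  ∏ s ∈ τ, ccdCond v s

/-- Unconditional subsplit probability `q(s)`: sum of `q(τ)` over topologies `τ ∈ T`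
containing `s`. -/
noncomputable def ccdSubProb (T : Finset (Finset (Subsplit α))) (v : Subsplit α → ℝ)
    (s : Subsplit α) : ℝ :=
  ∑ τ ∈ T.filter (fun τ => s ∈ τ), ccdTopProb v τ

/-- Unconditional clade probability `q(W)`: sum of `q(τ)` over topologies `τ ∈ T` in which
the clade `W` appears (i.e. `W = X` or `W` is a child clade of some subsplit of `τ`). -/
noncomputable def ccdCladeProb (X : Finset α) (T : Finset (Finset (Subsplit α)))
    (v : Subsplit α → ℝ) (W : Finset α) : ℝ :=
  ∑ τ ∈ T.filter (fun τ => W = X ∨ ∃ s ∈ τ, W ∈ s), ccdTopProb v τ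

/-- Fuel-based recursion computing the CCD conditional path probability. -/
noncomputable def ccdPathAux (v : Subsplit α → ℝ) : ℕ → Subsplit α → Subsplit α → ℝ
  | 0, a, d => if d = a then 1 else 0
  | n + 1, a, d => if d = a then 1 else
      ∑ s'' ∈ childSubsplits a, ccdCond v s'' * ccdPathAux v n s'' d

/-- CCD conditional path probability `q(a →* d | a)`: the sum over all descending chains of
subsplits from `a` to `d` of the product of the conditional probabilities along the chain. -/
noncomputable def ccdPath (v : Subsplit α → ℝ) (a d : Subsplit α) : ℝ :=
  ccdPathAux v ((Subsplit.clade a).card + 1) a d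

/-- CCD conditional path probability starting from a clade:
`q(W →* d | W) = Σ_{s'' : U(s'') = W} q(s'' | U(s'')) q(s'' →* d | s'')`. -/
noncomputable def ccdPathFromClade (v : Subsplit α → ℝ) (W : Finset α) (d : Subsplit α) : ℝ :=
  ∑ s'' ∈ subsplitsOn W, ccdCond v s'' * ccdPath v s'' d

end CCD

section SCD

variable {α : Type*} [DecidableEq α]

/-- SCD softmax conditional probability `q(s | t)`. -/
noncomputable def scdCond (v : PCSPair α → ℝ) (t s : Subsplit α) : ℝ :=
  Real.exp (v (t, s)) / ∑ s'' ∈ subsplitsOn (Subsplit.clade s), Real.exp (v (t, s''))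

/-- SCD probability of a topology `τ` on `X`: the product over PCSPs `(t → s)` of `τ` of
`q(s | t)`. -/
noncomputable def scdTopProb (v : PCSPair α → ℝ) (X : Finset α) (τ : Finset (Subsplit α)) : ℝ :=
  ∏ s ∈ τ, scdCond v (parentIn X τ s) s

/-- Unconditional subsplit probability `q(a)` for SCD-parameterized SBNs. -/
noncomputable def scdSubProb (T : Finset (Finset (Subsplit α))) (v : PCSPair α → ℝ)
    (X : Finset α) (a : Subsplit α) : ℝ :=
  ∑ τ ∈ T.filter (fun τ => a ∈ τ), scdTopProb v X τ

/-- Fuel-based recursion computing the SCD conditional path probability. -/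
noncomputable def scdPathAux (v : PCSPair α → ℝ) : ℕ → Subsplit α → Subsplit α → ℝ
  | 0, a, d => if d = a then 1 else 0
  | n + 1, a, d => if d = a then 1 else
      ∑ s'' ∈ childSubsplits a, scdCond v a s'' * scdPathAux v n s'' d

/-- SCD conditional path probability `q(a →* d | a)`. -/
noncomputable def scdPath (v : PCSPair α → ℝ) (a d : Subsplit α) : ℝ :=
  scdPathAux v ((Subsplit.clade a).card + 1) a d

/-- SCD conditional path probability from a subsplit `t` with designated child clade `W`:
`q(t/W →* d | t/W) = Σ_{s'' : U(s'') = W} q(s'' | t) q(s'' →* d | s'')`. -/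
noncomputable def scdPathFrom (v : PCSPair α → ℝ) (t : Subsplit α) (W : Finset α)
    (d : Subsplit α) : ℝ :=
  ∑ s'' ∈ subsplitsOn W, scdCond v t s'' * scdPath v s'' d

/-- Unconditional ancestor-descendant probability `q(a →* d)`: sum of `q(τ)` over topologies
`τ ∈ T` containing both `a` and `d` with `d` a descendant of `a`. -/
noncomputable def scdPairProb (T : Finset (Finset (Subsplit α))) (v : PCSPair α → ℝ)
    (X : Finset α) (a d : Subsplit α) : ℝ :=
  ∑ τ ∈ T.filter (fun τ => a ∈ τ ∧ d ∈ τ ∧ Descend a d), scdTopProb v X τ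

end SCD

/-!
Clades of a topology are laminar in a strong sense: if two clades `U(s)`, `U(s')` of members
of `τ` meet, then either `U(s) ⊆ U(s')` or `U(s')` lies inside a child clade of `s`. This is
proved by climbing from `s'` to its parent `t'`, using the claim for the pairs `(s, t')` and
`(t', s)` whose clades are larger. Now if `s|X̄ = s'|X̄` is nontrivial, some taxa `x, z ∈ X̄`
are separated by both `s` and `s'`, so neither parent clade fits inside a child clade of the
other; hence `U(s) = U(s')`, and a topology has only one subsplit per clade.
-/

namespace Subsplit

variable {α : Type*}

@[simp]
lemma valid_mk {Y Z : Finset α} : Valid s(Y, Z) ↔ Disjoint Y Z := Iff.rfl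

@[simp]
lemma nontriv_mk {Y Z : Finset α} : Nontriv s(Y, Z) ↔ Y.Nonempty ∧ Z.Nonempty := Iff.rfl

lemma eq_or_disjoint_of_mem {s : Subsplit α} (hv : s.Valid) {A B : Finset α}
    (hA : A ∈ s) (hB : B ∈ s) : A = B ∨ Disjoint A B := by
  induction s using Sym2.inductionOn with
  | hf Y Z =>
    rw [valid_mk] at hv
    rcases Sym2.mem_iff.mp hA with rfl | rfl <;> rcases Sym2.mem_iff.mp hB with rfl | rfl
    exacts [Or.inl rfl, Or.inr hv, Or.inr hv.symm, Or.inl rfl]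

def Separates (s : Subsplit α) (x z : α) : Prop :=
  ∃ Y Z : Finset α, s = s(Y, Z) ∧ x ∈ Y ∧ z ∈ Z

lemma Separates.not_subset_of_mem {s : Subsplit α} {x z : α} (h : s.Separates x z)
    (hv : s.Valid) {C : Finset α} (hC : C ∈ s) (hxC : x ∈ C) (hzC : z ∈ C) : False := by
  obtain ⟨Y, Z, rfl, hx, hz⟩ := h
  rw [valid_mk] at hv
  rcases Sym2.mem_iff.mp hC with rfl | rfl
  · exact disjoint_left.mp hv hzC hz
  · exact disjoint_left.mp hv hx hxC

variable [DecidableEq α]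

@[simp]
lemma clade_mk (Y Z : Finset α) : clade s(Y, Z) = Y ∪ Z := rfl

lemma subset_clade_of_mem {s : Subsplit α} {C : Finset α} (h : C ∈ s) : C ⊆ s.clade := by
  induction s using Sym2.inductionOn with
  | hf Y Z => rcases Sym2.mem_iff.mp h with rfl | rfl <;> simp

lemma card_lt_card_clade {s : Subsplit α} (hv : s.Valid) (hn : s.Nontriv) {C : Finset α}
    (h : C ∈ s) : C.card < s.clade.card := by
  induction s using Sym2.inductionOn with
  | hf Y Z =>
    rw [valid_mk] at hv
    rw [nontriv_mk] at hn
    rw [clade_mk, card_union_of_disjoint hv]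
    rcases Sym2.mem_iff.mp h with rfl | rfl
    · have := hn.2.card_pos; omega
    · have := hn.1.card_pos; omega

lemma two_le_card_clade {s : Subsplit α} (hv : s.Valid) (hn : s.Nontriv) :
    2 ≤ s.clade.card := by
  induction s using Sym2.inductionOn with
  | hf Y Z =>
    rw [valid_mk] at hv
    rw [nontriv_mk] at hn
    rw [clade_mk, card_union_of_disjoint hv]
    have := hn.1.card_pos
    have := hn.2.card_pos
    omega

lemma Separates.left_mem_clade {s : Subsplit α} {x z : α} (h : s.Separates x z) :
    x ∈ s.clade := by
  obtain ⟨Y, Z, rfl, hx, -⟩ := h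
  exact mem_union_left Z hx

lemma Separates.right_mem_clade {s : Subsplit α} {x z : α} (h : s.Separates x z) :
    z ∈ s.clade := by
  obtain ⟨Y, Z, rfl, -, hz⟩ := h
  exact mem_union_right Y hz

lemma separates_of_restrict_eq {s s' : Subsplit α} {B : Finset α}
    (heq : s.restrict B = s'.restrict B) (hnt : (s.restrict B).Nontriv) :
    ∃ x z, s.Separates x z ∧ s'.Separates x z := by
  induction s using Sym2.inductionOn with
  | hf Y Z =>
  induction s' using Sym2.inductionOn with
  | hf Y' Z' =>
    simp only [restrict, Sym2.map_mk, nontriv_mk] at heq hnt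
    obtain ⟨⟨x, hx⟩, ⟨z, hz⟩⟩ := hnt
    refine ⟨x, z, ⟨Y, Z, rfl, (mem_inter.mp hx).1, (mem_inter.mp hz).1⟩, ?_⟩
    rcases Sym2.eq_iff.mp heq with ⟨hY, hZ⟩ | ⟨hY, hZ⟩
    · exact ⟨Y', Z', rfl, (mem_inter.mp (hY ▸ hx)).1, (mem_inter.mp (hZ ▸ hz)).1⟩
    · exact ⟨Z', Y', Sym2.eq_swap, (mem_inter.mp (hY ▸ hx)).1, (mem_inter.mp (hZ ▸ hz)).1⟩

end Subsplit

namespace IsTopology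

open Subsplit

variable {α : Type*} [DecidableEq α] {X : Finset α} {τ : Finset (Subsplit α)}

lemma eq_of_clade_eq (hτ : IsTopology X τ) {s s' : Subsplit α} (hs : s ∈ τ) (hs' : s' ∈ τ)
    (h : s.clade = s'.clade) : s = s' := by
  rcases hτ.parentEx s hs with hX | ⟨t, ht, hmem⟩
  · obtain ⟨r, -, hr⟩ := hτ.root
    rw [hr s ⟨hs, hX⟩, hr s' ⟨hs', h ▸ hX⟩]
  · obtain ⟨r, -, hr⟩ :=
      hτ.children t ht _ hmem (two_le_card_clade (hτ.valid s hs) (hτ.nontriv s hs))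
    rw [hr s ⟨hs, rfl⟩, hr s' ⟨hs', h.symm⟩]

lemma card_clade_le_sup {s : Subsplit α} (hs : s ∈ τ) :
    s.clade.card ≤ τ.sup fun t => t.clade.card :=
  le_sup (f := fun t => t.clade.card) hs

lemma card_clade_lt_of_mem (hτ : IsTopology X τ) {s t : Subsplit α} (ht : t ∈ τ)
    (hmem : s.clade ∈ t) : s.clade.card < t.clade.card :=
  card_lt_card_clade (hτ.valid t ht) (hτ.nontriv t ht) hmem

lemma clade_subset (hτ : IsTopology X τ) {s : Subsplit α} (hs : s ∈ τ) : s.clade ⊆ X := by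
  rcases hτ.parentEx s hs with hX | ⟨t, ht, hmem⟩
  · exact hX.le
  · exact (subset_clade_of_mem hmem).trans (clade_subset hτ ht)
termination_by (τ.sup fun t => t.clade.card) - s.clade.card
decreasing_by
  have := hτ.card_clade_lt_of_mem ht hmem
  have := card_clade_le_sup ht
  omega

lemma clade_subset_or_subset_of_mem (hτ : IsTopology X τ) {s s' : Subsplit α} (hs : s ∈ τ)
    (hs' : s' ∈ τ) (hne : (s.clade ∩ s'.clade).Nonempty) :
    s.clade ⊆ s'.clade ∨ ∃ C ∈ s, s'.clade ⊆ C := by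
  rcases hτ.parentEx s' hs' with hX | ⟨t', ht', hmem⟩
  · exact Or.inl (hX ▸ hτ.clade_subset hs)
  have hsub : s'.clade ⊆ t'.clade := subset_clade_of_mem hmem
  have hne_t' : (s.clade ∩ t'.clade).Nonempty := hne.mono (inter_subset_inter_left hsub)
  rcases clade_subset_or_subset_of_mem hτ hs ht' hne_t' with hle | ⟨C, hC, hle⟩
  case inr => exact Or.inr ⟨C, hC, hsub.trans hle⟩
  by_cases heq : s.clade = t'.clade
  · exact Or.inr ⟨s'.clade, hτ.eq_of_clade_eq hs ht' heq ▸ hmem, subset_rfl⟩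
  -- `U(s) ⊊ U(t')`, so `U(s)` lies in a child of `t'`, which must be `U(s')` since it meets `U(s)`.
  rcases clade_subset_or_subset_of_mem hτ ht' hs (by rwa [inter_comm])
    with hle' | ⟨C, hC, hle'⟩
  · exact absurd (hle.antisymm hle') heq
  rcases eq_or_disjoint_of_mem (hτ.valid t' ht') hC hmem with rfl | hdisj
  · exact Or.inl hle'
  · obtain ⟨x, hx⟩ := hne
    rw [mem_inter] at hx
    exact (disjoint_left.mp hdisj (hle' hx.1) hx.2).elim
termination_by 2 * (τ.sup fun t => t.clade.card) - s.clade.card - s'.clade.card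
decreasing_by
  all_goals
    have := hτ.card_clade_lt_of_mem ht' hmem
    have := card_clade_le_sup ht'
    have := card_clade_le_sup hs
    omega

lemma eq_of_separates (hτ : IsTopology X τ) {s s' : Subsplit α} (hs : s ∈ τ) (hs' : s' ∈ τ)
    {x z : α} (h : s.Separates x z) (h' : s'.Separates x z) : s = s' := by
  have hne : (s.clade ∩ s'.clade).Nonempty :=
    ⟨x, mem_inter.mpr ⟨h.left_mem_clade, h'.left_mem_clade⟩⟩
  have hle : s.clade ⊆ s'.clade := by
    refine (hτ.clade_subset_or_subset_of_mem hs hs' hne).resolve_right ?_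
    rintro ⟨C, hC, hle⟩
    exact h.not_subset_of_mem (hτ.valid s hs) hC (hle h'.left_mem_clade)
      (hle h'.right_mem_clade)
  have hge : s'.clade ⊆ s.clade := by
    refine (hτ.clade_subset_or_subset_of_mem hs' hs (by rwa [inter_comm])).resolve_right ?_
    rintro ⟨C, hC, hle⟩
    exact h'.not_subset_of_mem (hτ.valid s' hs') hC (hle h.left_mem_clade)
      (hle h.right_mem_clade)
  exact hτ.eq_of_clade_eq hs hs' (hle.antisymm hge)

end IsTopology

section Statements

variable {α : Type*} [DecidableEq α]
theorem stmt9_general (X Xb : Finset α)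
    (τ : Finset (Subsplit α)) (hτ : IsTopology X τ)
    (s s' : Subsplit α) (hs : s ∈ τ) (hs' : s' ∈ τ)
    (heq : Subsplit.restrict s Xb = Subsplit.restrict s' Xb)
    (hnt : Subsplit.Nontriv (Subsplit.restrict s Xb)) :
    s = s' := by
  obtain ⟨x, z, h, h'⟩ := Subsplit.separates_of_restrict_eq heq hnt
  exact hτ.eq_of_separates hs hs' h h'

theorem stmt9 (X Xb : Finset α) (hsub : Xb ⊆ X)
    (τ : Finset (Subsplit α)) (hτ : IsTopology X τ)
    (s s' : Subsplit α) (hs : s ∈ τ) (hs' : s' ∈ τ)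
    (heq : Subsplit.restrict s Xb = Subsplit.restrict s' Xb)
    (hnt : Subsplit.Nontriv (Subsplit.restrict s Xb)) :
    s = s' :=
  stmt9_general X Xb τ hτ s s' hs hs' heq hnt

end Statements
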